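/- arXiv:math/0304382 — 6 statements merged into one kernel-verified Lean document; each statement's English description precedes it below -/
import Mathlib

section
/- For all positive integers r, m, s, the following identity of polynomials in ℚ[t] holds: (s−r−1)·z′(t) + (r+m+1)·(t·z′(t) + r·z(t)) = (−1)^m · ((s−1)!·m!·r·(r+1)/(s+m−1)!) · W(r,m,s)(t). -/
open Polynomial Finset

/-- `W(r,m,s)(t) = Σ_{j=0}^m (−1)^j C(r+m+1−j, m−j) C(s+m, j) t^{m−j}` as a polynomial in `ℚ[t]`. -/
noncomputable def W (r m s : ℕ) : Polynomial ℚ :=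
  ∑ j ∈ range (m + 1),
    C ((-1 : ℚ) ^ j * (Nat.choose (r + m + 1 - j) (m - j) : ℚ) * (Nat.choose (s + m) j : ℚ))
      * X ^ (m - j)

/-- `z(t) = Σ_{j=0}^m (−1)^j (C(r+j−1,j)·C(m,j)/C(s+j−1,j)) t^j`, the terminating
hypergeometric polynomial `₂F₁(r, −m; s; t)`. -/
noncomputable def z (r m s : ℕ) : Polynomial ℚ :=
  ∑ j ∈ range (m + 1),
    C ((-1 : ℚ) ^ j * (Nat.choose (r + j - 1) j : ℚ) * (Nat.choose m j : ℚ)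
        / (Nat.choose (s + j - 1) j : ℚ)) * X ^ j

/-! Compare coefficients of `t^n`. Writing `c n` for the coefficients of
`z = ₂F₁(r, −m; s; t)`, the ratio `c (n+1) / c n = -(r+n)(m-n) / ((n+1)(s+n))` turns the
coefficient of the left-hand side into `(r+n)(r+n+1)(s+m)/(s+n) · c n`, because
`(r+m+1)(s+n) - (s-r-1)(m-n) = (r+n+1)(s+m)`. Writing both this and the coefficient of `W`
through factorials shows that they agree. -/

lemma coeff_X_mul_derivative {R : Type*} [CommSemiring R] (p : R[X]) (n : ℕ) :
    (X * derivative p).coeff n = n * p.coeff n := by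
  cases n with
  | zero => simp
  | succ k => rw [coeff_X_mul, coeff_derivative]; push_cast; ring

lemma coeff_z (r m s n : ℕ) :
    (z r m s).coeff n = (-1 : ℚ) ^ n * (Nat.choose (r + n - 1) n : ℚ) * (Nat.choose m n : ℚ)
      / (Nat.choose (s + n - 1) n : ℚ) := by
  simp only [z, finsetSum_coeff, coeff_C_mul, coeff_X_pow, mul_ite, mul_one, mul_zero,
    Finset.sum_ite_eq, mem_range]
  split_ifs with h
  · rfl
  · simp [Nat.choose_eq_zero_of_lt (show m < n by omega)]

lemma coeff_z_of_lt {r m s n : ℕ} (hn : m < n) : (z r m s).coeff n = 0 := by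
  simp [coeff_z, Nat.choose_eq_zero_of_lt hn]

lemma coeff_W_of_le {r m s n : ℕ} (hn : n ≤ m) :
    (W r m s).coeff n
      = (-1 : ℚ) ^ (m - n) * (r + n + 1).choose n * (s + m).choose (m - n) := by
  simp only [W, finsetSum_coeff, coeff_C_mul, coeff_X_pow, mul_ite, mul_one, mul_zero]
  rw [Finset.sum_eq_single_of_mem (m - n) (by simp) (fun j hj hne => if_neg (by
    simp only [mem_range] at hj; omega)), if_pos (by omega),
    show r + m + 1 - (m - n) = r + n + 1 by omega, show m - (m - n) = n by omega]

lemma coeff_W_of_lt {r m s n : ℕ} (hn : m < n) : (W r m s).coeff n = 0 := by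
  simp only [W, finsetSum_coeff, coeff_C_mul, coeff_X_pow]
  exact Finset.sum_eq_zero fun j _ => by rw [if_neg (by omega), mul_zero]

lemma add_one_mul_add_two_mul_choose (r n : ℕ) :
    (r + 1) * (r + 2) * (r + n + 2).choose n = (r + n + 1) * (r + n + 2) * (r + n).choose n := by
  have h₁ := Nat.choose_mul_succ_eq (r + n) n
  have h₂ := Nat.choose_mul_succ_eq (r + n + 1) n
  rw [show r + n + 1 - n = r + 1 by omega] at h₁
  rw [show r + n + 1 + 1 - n = r + 2 by omega] at h₂
  linear_combination (r + n + 2) * h₁.symm + (r + 1) * h₂.symm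

-- `r + 1`, `s + 1` stand for the positive parameters, so that `r + n - 1` does not truncate.
section Shifted

variable (r s : ℕ) {m n : ℕ}

lemma coeff_z_add_one :
    (z (r + 1) m (s + 1)).coeff n
      = (-1 : ℚ) ^ n * (Nat.choose (r + n) n : ℚ) * (Nat.choose m n : ℚ)
          / (Nat.choose (s + n) n : ℚ) := by
  rw [coeff_z, show r + 1 + n - 1 = r + n by omega, show s + 1 + n - 1 = s + n by omega]

lemma coeff_z_add_one_succ (hn : n ≤ m) :
    ((n : ℚ) + 1) * (s + n + 1) * (z (r + 1) m (s + 1)).coeff (n + 1)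
      = -((r + n + 1) * ((m : ℚ) - n)) * (z (r + 1) m (s + 1)).coeff n := by
  have hr : ((r : ℚ) + n + 1) * (r + n).choose n = (r + n + 1).choose (n + 1) * (n + 1) := by
    exact_mod_cast Nat.add_one_mul_choose_eq (r + n) n
  have hs : ((s : ℚ) + n + 1) * (s + n).choose n = (s + n + 1).choose (n + 1) * (n + 1) := by
    exact_mod_cast Nat.add_one_mul_choose_eq (s + n) n
  have hm : (m.choose (n + 1) : ℚ) * (n + 1) = m.choose n * ((m : ℚ) - n) := by
    rw [← Nat.cast_sub hn]; exact_mod_cast Nat.choose_succ_right_eq m n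
  have hs₀ : ((s + n).choose n : ℚ) ≠ 0 := by exact_mod_cast (Nat.choose_pos (by omega)).ne'
  have hs₁ : ((s + n + 1).choose (n + 1) : ℚ) ≠ 0 := by
    exact_mod_cast (Nat.choose_pos (by omega)).ne'
  rw [coeff_z_add_one, coeff_z_add_one, show r + (n + 1) = r + n + 1 by omega,
    show s + (n + 1) = s + n + 1 by omega]
  field_simp
  linear_combination
    (-(n + 1) * (-1 : ℚ) ^ n * (r + n + 1).choose (n + 1) * m.choose (n + 1)) * hs
    + ((-1 : ℚ) ^ n * (s + n + 1).choose (n + 1) * m.choose (n + 1) * (n + 1)) * hr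
    + (-(-1 : ℚ) ^ n * (s + n + 1).choose (n + 1) * (r + n + 1) * (r + n).choose n) * hm

lemma coeff_contiguous (hn : n ≤ m) :
    ((s : ℚ) + n + 1) * (((s : ℚ) - r - 1) * ((n + 1) * (z (r + 1) m (s + 1)).coeff (n + 1))
        + (r + m + 2) * ((n + r + 1) * (z (r + 1) m (s + 1)).coeff n))
      = (r + n + 1) * (r + n + 2) * (s + m + 1) * (z (r + 1) m (s + 1)).coeff n := by
  linear_combination ((s : ℚ) - r - 1) * coeff_z_add_one_succ r s hn

lemma coeff_z_add_one_eq_coeff_W (hn : n ≤ m) :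
    ((r : ℚ) + n + 1) * (r + n + 2) * (s + m + 1) * (z (r + 1) m (s + 1)).coeff n
      = (s + n + 1)
          * ((-1) ^ m * ((s.factorial : ℚ) * m.factorial * (r + 1) * (r + 2) / (s + m).factorial))
          * (W (r + 1) m (s + 1)).coeff n := by
  have hsign : (-1 : ℚ) ^ m * (-1) ^ (m - n) = (-1) ^ n := by
    rw [← pow_add, show m + (m - n) = n + 2 * (m - n) by omega, pow_add, pow_mul]
    simp
  have hr : ((r : ℚ) + 1) * (r + 2) * (r + n + 2).choose n
      = (r + n + 1) * (r + n + 2) * (r + n).choose n := by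
    exact_mod_cast add_one_mul_add_two_mul_choose r n
  have hs : ((s : ℚ) + n + 1) * (s + n).choose n * s.factorial * m.factorial
        * (s + m + 1).choose (m - n)
      = (s + m + 1) * (s + m).factorial * m.choose n := by
    rw [Nat.cast_choose ℚ (show n ≤ s + n by omega), Nat.cast_choose ℚ hn,
      Nat.cast_choose ℚ (show m - n ≤ s + m + 1 by omega),
      show s + n - n = s by omega, show s + m + 1 - (m - n) = s + n + 1 by omega,
      Nat.factorial_succ (s + m), Nat.factorial_succ (s + n)]
    field_simp
    push_cast
    ring
  have hS : ((s + n).choose n : ℚ) ≠ 0 := by exact_mod_cast (Nat.choose_pos (by omega)).ne'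
  rw [coeff_z_add_one, coeff_W_of_le hn, show r + 1 + n + 1 = r + n + 2 by omega,
    show s + 1 + m = s + m + 1 by omega]
  field_simp
  rw [← hsign]
  linear_combination
    (-(-1 : ℚ) ^ m * (-1) ^ (m - n) * (r + n + 1) * (r + n + 2) * (r + n).choose n) * hs
    - ((-1 : ℚ) ^ m * (-1) ^ (m - n) * (s + n + 1) * (s + n).choose n * s.factorial * m.factorial
        * (s + m + 1).choose (m - n)) * hr

end Shifted

theorem statement0_general (r m s : ℕ) (hr : 0 < r) (hs : 0 < s) :
    C ((s : ℚ) - r - 1) * derivative (z r m s)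
      + C ((r : ℚ) + m + 1) * (X * derivative (z r m s) + C (r : ℚ) * z r m s)
    = C ((-1 : ℚ) ^ m *
        ((Nat.factorial (s - 1) : ℚ) * (Nat.factorial m : ℚ) * r * (r + 1)
          / (Nat.factorial (s + m - 1) : ℚ))) * W r m s := by
  obtain ⟨r, rfl⟩ := Nat.exists_eq_add_one.mpr hr
  obtain ⟨s, rfl⟩ := Nat.exists_eq_add_one.mpr hs
  ext n
  simp only [coeff_add, coeff_C_mul, coeff_X_mul_derivative, coeff_derivative,
    Nat.add_sub_cancel, show s + 1 + m - 1 = s + m by omega]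
  push_cast
  rcases le_or_gt n m with hn | hn
  · apply mul_left_cancel₀ (show (s : ℚ) + n + 1 ≠ 0 by positivity)
    linear_combination coeff_contiguous r s hn + coeff_z_add_one_eq_coeff_W r s hn
  · simp [coeff_z_of_lt hn, coeff_z_of_lt (hn.trans n.lt_succ_self), coeff_W_of_lt hn]

/-- Lemma 1:
`(s−r−1)·z′ + (r+m+1)·(t·z′ + r·z) = (−1)^m ((s−1)!·m!·r·(r+1)/(s+m−1)!) · W(r,m,s)`. -/
theorem statement0 (r m s : ℕ) (hr : 0 < r) (hm : 0 < m) (hs : 0 < s) :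
    C ((s : ℚ) - r - 1) * derivative (z r m s)
      + C ((r : ℚ) + m + 1) * (X * derivative (z r m s) + C (r : ℚ) * z r m s)
    = C ((-1 : ℚ) ^ m *
        ((Nat.factorial (s - 1) : ℚ) * (Nat.factorial m : ℚ) * r * (r + 1)
          / (Nat.factorial (s + m - 1) : ℚ))) * W r m s :=
  statement0_general r m s hr hs
end

section
/- Let r, m, s be positive integers and let q be a twice differentiable real function on an open interval I with I ∩ {0,1} = ∅ such that q(t) ∉ {0, 1, t} on I. If q satisfies the Riccati equation q′ = (1/(t(t−1)))·((b₄−b₃)q² + (2b₁t + b₂ − b₄ − 1)q − (b₁+b₂)t) on I, then q solves P_VI(α, β, γ, δ) on I with α = r²/2, β = −(m+s)²/2, γ = (r−s+1)²/2, δ = (1−m²)/2. -/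
/-!
Differentiating the Riccati equation `t (t - 1) q' = A q² + (B t + C) q + D t` and substituting it
back expresses `q''` as a rational function of `t` and `q`; when `A + B + C + D = 0` this function
coincides identically with the right-hand side of
`P_VI(A²/2, -D²/2, (A + C)²/2, (1 - (A + B - 1)²)/2)`.
In terms of the `bᵢ`, `A = b₄ - b₃ = -r`, `B = 2b₁ = m + r + 1`, `C = b₂ - b₄ - 1 = s - 1` and
`D = -(b₁ + b₂) = -(m + s)`.
-/

/-- The right-hand side of the Painlevé VI equation `P_VI(α,β,γ,δ)` for a function `q`
with derivative `q'`, at the point `t`. -/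
noncomputable def pviRHS (α β γ δ : ℝ) (q q' : ℝ → ℝ) (t : ℝ) : ℝ :=
  (1 / 2) * (1 / q t + 1 / (q t - 1) + 1 / (q t - t)) * (q' t) ^ 2
    - (1 / t + 1 / (t - 1) + 1 / (q t - t)) * q' t
    + (q t * (q t - 1) * (q t - t) / (t ^ 2 * (t - 1) ^ 2)) *
        (α + β * t / (q t) ^ 2 + γ * (t - 1) / (q t - 1) ^ 2
          + δ * t * (t - 1) / (q t - t) ^ 2)

open Filter Topology

noncomputable def riccatiRHS (A B C D t x : ℝ) : ℝ :=
  (A * x ^ 2 + (B * t + C) * x + D * t) / (t * (t - 1))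

theorem hasDerivAt_riccatiRHS_comp {A B C D t v : ℝ} {q : ℝ → ℝ} (hq : HasDerivAt q v t)
    (ht0 : t ≠ 0) (ht1 : t ≠ 1) :
    HasDerivAt (fun u ↦ riccatiRHS A B C D u (q u))
      (((2 * A * q t * v + B * q t + (B * t + C) * v + D) * (t * (t - 1))
        - (A * q t ^ 2 + (B * t + C) * q t + D * t) * (2 * t - 1)) / (t * (t - 1)) ^ 2) t := by
  have hnum : HasDerivAt (fun u ↦ A * q u ^ 2 + (B * u + C) * q u + D * u)
      (2 * A * q t * v + B * q t + (B * t + C) * v + D) t := by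
    refine ((((hq.pow 2).const_mul A).add
      ((((hasDerivAt_id t).const_mul B).add_const C).mul hq)).add
        ((hasDerivAt_id t).const_mul D)).congr_deriv ?_
    simp only [id, Nat.cast_ofNat]
    ring
  have hden : HasDerivAt (fun u : ℝ ↦ u * (u - 1)) (2 * t - 1) t := by
    refine ((hasDerivAt_id t).mul ((hasDerivAt_id t).sub_const 1)).congr_deriv ?_
    simp only [id]
    ring
  exact hnum.div hden (mul_ne_zero ht0 (sub_ne_zero.mpr ht1))

-- Without `A + B + C + D = 0` (the numerator vanishing at `t = q = 1`) the identity fails.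
theorem riccati_deriv_eq_pviRHS {A B C D t : ℝ} {q q' : ℝ → ℝ} (hABCD : A + B + C + D = 0)
    (ht0 : t ≠ 0) (ht1 : t ≠ 1) (hq0 : q t ≠ 0) (hq1 : q t ≠ 1) (hqt : q t ≠ t)
    (hric : q' t = riccatiRHS A B C D t (q t)) :
    ((2 * A * q t * q' t + B * q t + (B * t + C) * q' t + D) * (t * (t - 1))
        - (A * q t ^ 2 + (B * t + C) * q t + D * t) * (2 * t - 1)) / (t * (t - 1)) ^ 2
      = pviRHS (A ^ 2 / 2) (-D ^ 2 / 2) ((A + C) ^ 2 / 2) ((1 - (A + B - 1) ^ 2) / 2) q q' t := by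
  obtain rfl : D = -(A + B + C) := by linarith
  have ht1' : t - 1 ≠ 0 := sub_ne_zero.mpr ht1
  have hq1' : q t - 1 ≠ 0 := sub_ne_zero.mpr hq1
  have hqt' : q t - t ≠ 0 := sub_ne_zero.mpr hqt
  rw [pviRHS, hric, riccatiRHS]
  field_simp
  ring

theorem hasDerivAt_pviRHS_of_riccati {A B C D t : ℝ} {q q' : ℝ → ℝ} (hABCD : A + B + C + D = 0)
    (hq : HasDerivAt q (q' t) t) (hric : ∀ᶠ u in 𝓝 t, q' u = riccatiRHS A B C D u (q u))
    (ht0 : t ≠ 0) (ht1 : t ≠ 1) (hq0 : q t ≠ 0) (hq1 : q t ≠ 1) (hqt : q t ≠ t) :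
    HasDerivAt q'
      (pviRHS (A ^ 2 / 2) (-D ^ 2 / 2) ((A + C) ^ 2 / 2) ((1 - (A + B - 1) ^ 2) / 2) q q' t) t := by
  rw [← riccati_deriv_eq_pviRHS hABCD ht0 ht1 hq0 hq1 hqt hric.self_of_nhds]
  exact (hasDerivAt_riccatiRHS_comp hq ht0 ht1).congr_of_eventuallyEq hric

theorem statement3_general (r m s : ℕ)
    (a b : ℝ) (hI : Set.Ioo a b ∩ {0, 1} = ∅)
    (q q' q'' : ℝ → ℝ)
    (hq : ∀ t ∈ Set.Ioo a b, HasDerivAt q (q' t) t)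
    (hq' : ∀ t ∈ Set.Ioo a b, HasDerivAt q' (q'' t) t)
    (hne : ∀ t ∈ Set.Ioo a b, q t ≠ 0 ∧ q t ≠ 1 ∧ q t ≠ t)
    (hric : ∀ t ∈ Set.Ioo a b,
      q' t = (1 / (t * (t - 1))) *
        (((((m : ℝ) - r - 1) / 2) - (((r : ℝ) + m - 1) / 2)) * (q t) ^ 2
          + (2 * (((m : ℝ) + r + 1) / 2) * t + (((m : ℝ) - r + 2 * s - 1) / 2)
              - (((m : ℝ) - r - 1) / 2) - 1) * q t
          - ((((m : ℝ) + r + 1) / 2) + (((m : ℝ) - r + 2 * s - 1) / 2)) * t)) :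
    ∀ t ∈ Set.Ioo a b,
      q'' t = pviRHS ((r : ℝ) ^ 2 / 2) (-((m : ℝ) + s) ^ 2 / 2) (((r : ℝ) - s + 1) ^ 2 / 2)
        ((1 - (m : ℝ) ^ 2) / 2) q q' t := by
  intro t ht
  have ht0 : t ≠ 0 := fun h ↦ (Set.eq_empty_iff_forall_notMem.mp hI) t ⟨ht, .inl h⟩
  have ht1 : t ≠ 1 := fun h ↦ (Set.eq_empty_iff_forall_notMem.mp hI) t ⟨ht, .inr h⟩
  have hric' : ∀ᶠ u in 𝓝 t,
      q' u = riccatiRHS (-r) (m + r + 1) (s - 1) (-(m + s)) u (q u) := by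
    filter_upwards [isOpen_Ioo.mem_nhds ht] with u hu
    rw [hric u hu, riccatiRHS]
    ring
  obtain ⟨hq0, hq1, hqt⟩ := hne t ht
  have hpvi := hasDerivAt_pviRHS_of_riccati (by ring) (hq t ht) hric' ht0 ht1 hq0 hq1 hqt
  rw [(hq' t ht).unique hpvi]
  congr 1 <;> ring

/-- Any solution of the Riccati equation
`q′ = (1/(t(t−1)))((b₄−b₃)q² + (2b₁t+b₂−b₄−1)q − (b₁+b₂)t)` with
`b₁ = (m+r+1)/2`, `b₂ = (m−r+2s−1)/2`, `b₃ = (r+m−1)/2`, `b₄ = (m−r−1)/2`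
solves `P_VI(r²/2, −(m+s)²/2, (r−s+1)²/2, (1−m²)/2)`. -/
theorem statement3 (r m s : ℕ) (hr : 0 < r) (hm : 0 < m) (hs : 0 < s)
    (a b : ℝ) (hI : Set.Ioo a b ∩ {0, 1} = ∅)
    (q q' q'' : ℝ → ℝ)
    (hq : ∀ t ∈ Set.Ioo a b, HasDerivAt q (q' t) t)
    (hq' : ∀ t ∈ Set.Ioo a b, HasDerivAt q' (q'' t) t)
    (hne : ∀ t ∈ Set.Ioo a b, q t ≠ 0 ∧ q t ≠ 1 ∧ q t ≠ t)
    (hric : ∀ t ∈ Set.Ioo a b,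
      q' t = (1 / (t * (t - 1))) *
        (((((m : ℝ) - r - 1) / 2) - (((r : ℝ) + m - 1) / 2)) * (q t) ^ 2
          + (2 * (((m : ℝ) + r + 1) / 2) * t + (((m : ℝ) - r + 2 * s - 1) / 2)
              - (((m : ℝ) - r - 1) / 2) - 1) * q t
          - ((((m : ℝ) + r + 1) / 2) + (((m : ℝ) - r + 2 * s - 1) / 2)) * t)) :
    ∀ t ∈ Set.Ioo a b,
      q'' t = pviRHS ((r : ℝ) ^ 2 / 2) (-((m : ℝ) + s) ^ 2 / 2) (((r : ℝ) - s + 1) ^ 2 / 2)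
        ((1 - (m : ℝ) ^ 2) / 2) q q' t :=
  statement3_general r m s a b hI q q' q'' hq hq' hne hric
end

section
/- Let b₁, b₂, b₄ be real numbers, set b₃ = b₁ − 1, and let q be a differentiable real function on an open interval I with I ∩ {0,1} = ∅ such that q(t) ∉ {0, 1, t} on I. If q satisfies the Riccati equation q′ = (1/(t(t−1)))·((b₄−b₃)q² + (2b₁t + b₂ − b₄ − 1)q − (b₁+b₂)t) on I, then the momentum p(t) := t(t−1)q′/(2q(q−1)(q−t)) + (1/2)·((b₁+b₂)/q + (b₁−b₂)/(q−1) + (b₃+b₄)/(q−t)) equals (b₁+b₄)/(q−t) on I. -/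
/-- If `q` satisfies the Riccati equation
`q′ = (1/(t(t−1)))((b₄−b₃)q² + (2b₁t+b₂−b₄−1)q − (b₁+b₂)t)` with `b₃ = b₁ − 1`, then the
momentum `p = t(t−1)q′/(2q(q−1)(q−t)) + (1/2)((b₁+b₂)/q + (b₁−b₂)/(q−1) + (b₃+b₄)/(q−t))`
equals `(b₁+b₄)/(q−t)`. -/
theorem statement4 (b₁ b₂ b₄ : ℝ) (a b : ℝ) (hI : Set.Ioo a b ∩ {0, 1} = ∅)
    (q q' : ℝ → ℝ)
    (hq : ∀ t ∈ Set.Ioo a b, HasDerivAt q (q' t) t)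
    (hne : ∀ t ∈ Set.Ioo a b, q t ≠ 0 ∧ q t ≠ 1 ∧ q t ≠ t)
    (hric : ∀ t ∈ Set.Ioo a b,
      q' t = (1 / (t * (t - 1))) *
        ((b₄ - (b₁ - 1)) * (q t) ^ 2 + (2 * b₁ * t + b₂ - b₄ - 1) * q t - (b₁ + b₂) * t)) :
    ∀ t ∈ Set.Ioo a b,
      t * (t - 1) * q' t / (2 * q t * (q t - 1) * (q t - t))
        + (1 / 2) * ((b₁ + b₂) / q t + (b₁ - b₂) / (q t - 1) + ((b₁ - 1) + b₄) / (q t - t))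
      = (b₁ + b₄) / (q t - t) := by
  intro t ht
  have ht0 : t ≠ 0 := by
    intro h; have : t ∈ Set.Ioo a b ∩ ({0, 1} : Set ℝ) := ⟨ht, by simp [h]⟩
    simp [hI] at this
  have ht1 : t ≠ 1 := by
    intro h; have : t ∈ Set.Ioo a b ∩ ({0, 1} : Set ℝ) := ⟨ht, by simp [h]⟩
    simp [hI] at this
  obtain ⟨h0, h1, h2⟩ := hne t ht
  have h1' : q t - 1 ≠ 0 := sub_ne_zero.mpr h1
  have h2' : q t - t ≠ 0 := sub_ne_zero.mpr h2
  have ht1' : t - 1 ≠ 0 := sub_ne_zero.mpr ht1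
  rw [hric t ht]
  field_simp
  ring
end

section
/- Let b₁, b₂, b₃, b₄ be real numbers, let t₀ be a complex number with t₀ ∉ {0, 1}, and let h be a function meromorphic at t₀ with a pole of order k ≥ 1 at t₀, satisfying the differential equation t²(t−1)²·h′·(h″)² + ((2h − (2t−1)h′)·h′ + b₁b₂b₃b₄)² = Π_{j=1}^4 (h′ + b_j²) on a punctured neighborhood of t₀. Then k = 1 and the residue of h at t₀ is t₀(t₀−1); that is, h(t) − t₀(t₀−1)/(t−t₀) extends holomorphically to t₀. -/
/-!
Write `u = t - t₀` and `h = g / u^k`. Then `h' = G₁ / u^(k+1)` and `h'' = G₂ / u^(k+2)` with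
`G₁, G₂` analytic, `G₁(t₀) = -k g(t₀)` and `G₂(t₀) = k(k+1) g(t₀)`. Multiplying the sigma form
by `u^(4k+4)` gives an identity between analytic functions, which therefore also holds at `t₀`.
There the term `t²(t-1)² h' h''²` contributes only if `k = 1`; for `k ≥ 2` the identity reduces
to `4 t₀ (t₀ - 1) k⁴ g(t₀)⁴ = 0`, which is impossible, and for `k = 1` it reads
`4 t₀ (t₀ - 1) g(t₀)³ (g(t₀) - t₀ (t₀ - 1)) = 0`.
-/

open Filter Topology

section PoleDerivative

variable {𝕜 : Type*} [NontriviallyNormedField 𝕜]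

noncomputable def poleDerivNumerator (G : 𝕜 → 𝕜) (t₀ : 𝕜) (m : ℕ) (t : 𝕜) : 𝕜 :=
  deriv G t * (t - t₀) - m * G t

theorem AnalyticAt.poleDerivNumerator [CompleteSpace 𝕜] {G : 𝕜 → 𝕜} {t₀ : 𝕜}
    (hG : AnalyticAt 𝕜 G t₀) (m : ℕ) :
    AnalyticAt 𝕜 (poleDerivNumerator G t₀ m) t₀ := by
  unfold _root_.poleDerivNumerator
  fun_prop

@[simp]
theorem poleDerivNumerator_self (G : 𝕜 → 𝕜) (t₀ : 𝕜) (m : ℕ) :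
    poleDerivNumerator G t₀ m t₀ = -m * G t₀ := by
  simp [poleDerivNumerator]

theorem eventually_deriv_eq_poleDerivNumerator_div [CompleteSpace 𝕜] {G h : 𝕜 → 𝕜} {t₀ : 𝕜}
    {m : ℕ} (hG : AnalyticAt 𝕜 G t₀) (hrep : ∀ᶠ t in 𝓝[≠] t₀, h t = G t / (t - t₀) ^ m) :
    ∀ᶠ t in 𝓝[≠] t₀, deriv h t = poleDerivNumerator G t₀ m t / (t - t₀) ^ (m + 1) := by
  rw [eventually_nhdsWithin_iff] at hrep ⊢
  filter_upwards [hrep.eventually_nhds, hG.eventually_analyticAt] with t hrep_t hGt ht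
  have hu : t - t₀ ≠ 0 := sub_ne_zero.mpr ht
  have hloc : h =ᶠ[𝓝 t] fun s => G s / (s - t₀) ^ m := by
    filter_upwards [hrep_t, eventually_ne_nhds ht] with s hs hst using hs hst
  have hderiv : HasDerivAt (fun s => G s / (s - t₀) ^ m) _ t :=
    hGt.differentiableAt.hasDerivAt.div (((hasDerivAt_id t).sub_const t₀).pow m)
      (pow_ne_zero m hu)
  rw [hloc.deriv_eq, hderiv.deriv, poleDerivNumerator]
  rcases m with _ | m
  · simp [hu]
  · field_simp
    simp only [id_eq, Nat.add_sub_cancel]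
    ring

end PoleDerivative

theorem ContinuousAt.eq_of_eventually_nhdsNE {X Y : Type*} [TopologicalSpace X]
    [TopologicalSpace Y] [T2Space Y] {f : X → Y} {x : X} [(𝓝[≠] x).NeBot] {y : Y}
    (hf : ContinuousAt f x) (h : ∀ᶠ t in 𝓝[≠] x, f t = y) : f x = y :=
  tendsto_nhds_unique (hf.tendsto.mono_left nhdsWithin_le_nhds)
    (tendsto_const_nhds.congr' (h.mono fun _ => Eq.symm))

theorem AnalyticAt.dslope {𝕜 E : Type*} [NontriviallyNormedField 𝕜] [NormedAddCommGroup E]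
    [NormedSpace 𝕜 E] {f : 𝕜 → E} {z₀ : 𝕜} (hf : AnalyticAt 𝕜 f z₀) :
    AnalyticAt 𝕜 (dslope f z₀) z₀ :=
  let ⟨_, hp⟩ := hf
  hp.has_fpower_series_dslope_fslope.analyticAt

section SigmaForm

variable {K : Type*} [Field K]

def sigmaPVI (b₁ b₂ b₃ b₄ t h h' h'' : K) : K :=
  t ^ 2 * (t - 1) ^ 2 * h' * h'' ^ 2 + ((2 * h - (2 * t - 1) * h') * h' + b₁ * b₂ * b₃ * b₄) ^ 2
    - (h' + b₁ ^ 2) * (h' + b₂ ^ 2) * (h' + b₃ ^ 2) * (h' + b₄ ^ 2)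

def sigmaPVICleared (b₁ b₂ b₃ b₄ : K) (n : ℕ) (t u g G₁ G₂ : K) : K :=
  t ^ 2 * (t - 1) ^ 2 * G₁ * G₂ ^ 2 * u ^ n
    + ((2 * g * u - (2 * t - 1) * G₁) * G₁ + b₁ * b₂ * b₃ * b₄ * u ^ (2 * n + 4)) ^ 2
    - (G₁ + b₁ ^ 2 * u ^ (n + 2)) * (G₁ + b₂ ^ 2 * u ^ (n + 2))
      * (G₁ + b₃ ^ 2 * u ^ (n + 2)) * (G₁ + b₄ ^ 2 * u ^ (n + 2))

theorem sigmaPVICleared_eq (b₁ b₂ b₃ b₄ : K) (n : ℕ) (t g G₁ G₂ : K) {u : K} (hu : u ≠ 0) :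
    sigmaPVICleared b₁ b₂ b₃ b₄ n t u g G₁ G₂ = u ^ (4 * n + 8)
      * sigmaPVI b₁ b₂ b₃ b₄ t (g / u ^ (n + 1)) (G₁ / u ^ (n + 1 + 1))
        (G₂ / u ^ (n + 1 + 1 + 1)) := by
  unfold sigmaPVICleared sigmaPVI
  field_simp
  ring

theorem sigmaPVICleared_zero_of_ne_zero (b₁ b₂ b₃ b₄ : K) {n : ℕ} (hn : n ≠ 0) (t g G₂ : K) :
    sigmaPVICleared b₁ b₂ b₃ b₄ n t 0 g (-(n + 1) * g) G₂
      = 4 * t * (t - 1) * (n + 1) ^ 4 * g ^ 4 := by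
  simp only [sigmaPVICleared, zero_pow hn, zero_pow (Nat.succ_ne_zero _)]
  ring

theorem sigmaPVICleared_zero_zero (b₁ b₂ b₃ b₄ t g : K) :
    sigmaPVICleared b₁ b₂ b₃ b₄ 0 t 0 g (-g) (2 * g)
      = 4 * t * (t - 1) * g ^ 3 * (g - t * (t - 1)) := by
  simp only [sigmaPVICleared, zero_pow (Nat.succ_ne_zero _)]
  ring

end SigmaForm

theorem eventually_sigmaPVICleared_eq_zero {b₁ b₂ b₃ b₄ t₀ : ℂ} {h g : ℂ → ℂ} {n : ℕ}
    (hg : AnalyticAt ℂ g t₀) (hrep : ∀ᶠ t in 𝓝[≠] t₀, h t = g t / (t - t₀) ^ (n + 1))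
    (hode : ∀ᶠ t in 𝓝[≠] t₀, sigmaPVI b₁ b₂ b₃ b₄ t (h t) (deriv h t) (deriv (deriv h) t) = 0) :
    ∀ᶠ t in 𝓝[≠] t₀, sigmaPVICleared b₁ b₂ b₃ b₄ n t (t - t₀) (g t)
      (poleDerivNumerator g t₀ (n + 1) t)
      (poleDerivNumerator (poleDerivNumerator g t₀ (n + 1)) t₀ (n + 1 + 1) t) = 0 := by
  have hrep₁ := eventually_deriv_eq_poleDerivNumerator_div hg hrep
  have hrep₂ := eventually_deriv_eq_poleDerivNumerator_div (hg.poleDerivNumerator _) hrep₁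
  filter_upwards [hrep, hrep₁, hrep₂, hode, self_mem_nhdsWithin] with t e₀ e₁ e₂ ode ht
  rw [sigmaPVICleared_eq _ _ _ _ _ _ _ _ _ (sub_ne_zero.mpr ht), ← e₀, ← e₁, ← e₂, ode, mul_zero]

theorem sigmaPVICleared_pole_eq_zero {b₁ b₂ b₃ b₄ t₀ : ℂ} {h g : ℂ → ℂ} {n : ℕ}
    (hg : AnalyticAt ℂ g t₀) (hrep : ∀ᶠ t in 𝓝[≠] t₀, h t = g t / (t - t₀) ^ (n + 1))
    (hode : ∀ᶠ t in 𝓝[≠] t₀, sigmaPVI b₁ b₂ b₃ b₄ t (h t) (deriv h t) (deriv (deriv h) t) = 0) :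
    sigmaPVICleared b₁ b₂ b₃ b₄ n t₀ 0 (g t₀) (-(n + 1) * g t₀) ((n + 1) * (n + 2) * g t₀)
      = 0 := by
  have hG₁ := hg.poleDerivNumerator (n + 1)
  have hG₂ := hG₁.poleDerivNumerator (n + 1 + 1)
  have hcont : ContinuousAt (fun t => sigmaPVICleared b₁ b₂ b₃ b₄ n t (t - t₀) (g t)
      (poleDerivNumerator g t₀ (n + 1) t)
      (poleDerivNumerator (poleDerivNumerator g t₀ (n + 1)) t₀ (n + 1 + 1) t)) t₀ := by
    have := hg.continuousAt
    have := hG₁.continuousAt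
    have := hG₂.continuousAt
    unfold sigmaPVICleared
    fun_prop
  convert hcont.eq_of_eventually_nhdsNE (eventually_sigmaPVICleared_eq_zero hg hrep hode) using 2
  · simp
  · simp
  · simp
    ring

/-- If `h` is meromorphic at `t₀ ∉ {0,1}` with a pole of order `k ≥ 1` there (i.e.
`h(t) = g(t)/(t−t₀)^k` near `t₀` with `g` analytic at `t₀` and `g(t₀) ≠ 0`), and `h`
satisfies the sigma-form of Painlevé VI
`t²(t−1)²h′(h″)² + ((2h − (2t−1)h′)h′ + b₁b₂b₃b₄)² = Π_{j=1}^4 (h′ + b_j²)`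
near `t₀`, then `k = 1`, the residue of `h` at `t₀` is `t₀(t₀−1)`, and
`h(t) − t₀(t₀−1)/(t−t₀)` extends holomorphically to `t₀`. -/
theorem statement12 (b₁ b₂ b₃ b₄ : ℝ) (t₀ : ℂ) (ht0 : t₀ ≠ 0) (ht1 : t₀ ≠ 1)
    (h g : ℂ → ℂ) (k : ℕ) (hk : 1 ≤ k)
    (hg : AnalyticAt ℂ g t₀) (hg0 : g t₀ ≠ 0)
    (hrep : ∀ᶠ t in nhdsWithin t₀ {t₀}ᶜ, h t = g t / (t - t₀) ^ k)
    (hode : ∀ᶠ t in nhdsWithin t₀ {t₀}ᶜ,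
      t ^ 2 * (t - 1) ^ 2 * deriv h t * (deriv (deriv h) t) ^ 2
        + ((2 * h t - (2 * t - 1) * deriv h t) * deriv h t
            + (b₁ : ℂ) * (b₂ : ℂ) * (b₃ : ℂ) * (b₄ : ℂ)) ^ 2
      = (deriv h t + (b₁ : ℂ) ^ 2) * (deriv h t + (b₂ : ℂ) ^ 2)
          * (deriv h t + (b₃ : ℂ) ^ 2) * (deriv h t + (b₄ : ℂ) ^ 2)) :
    k = 1 ∧ g t₀ = t₀ * (t₀ - 1) ∧
      ∃ f : ℂ → ℂ, AnalyticAt ℂ f t₀ ∧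
        ∀ᶠ t in nhdsWithin t₀ {t₀}ᶜ, h t = t₀ * (t₀ - 1) / (t - t₀) + f t := by
  obtain ⟨n, rfl⟩ := Nat.exists_eq_add_of_le' hk
  have hpole := sigmaPVICleared_pole_eq_zero hg hrep (hode.mono fun _ => sub_eq_zero.mpr)
  obtain rfl : n = 0 := by
    by_contra hn
    rw [sigmaPVICleared_zero_of_ne_zero _ _ _ _ hn] at hpole
    simp [ht0, sub_ne_zero.mpr ht1, hg0, Nat.cast_add_one_ne_zero] at hpole
  have hres : g t₀ = t₀ * (t₀ - 1) := by
    norm_num [sigmaPVICleared_zero_zero] at hpole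
    simpa [ht0, sub_ne_zero.mpr ht1, hg0, sub_eq_zero] using hpole
  refine ⟨rfl, hres, dslope g t₀, hg.dslope, ?_⟩
  filter_upwards [hrep, self_mem_nhdsWithin] with t e₀ ht
  rw [e₀, dslope_of_ne g ht, slope_def_field, ← hres]
  field_simp [sub_ne_zero.mpr ht]
  ring
end

section
/- Let u be a smooth real function on an open interval I ⊆ ℝ, let δ be the differential operator δφ = t(t−1)·dφ/dt, and for n ≥ 1 define D_n = det(δ^{i+j}u)_{0≤i,j≤n−1} (the n×n Hankel-type determinant of the iterated δ-derivatives of u), with D₀ = 1. Then for every n ≥ 1, D_n·δ²D_n − (δD_n)² = D_{n+1}·D_{n−1} on I; equivalently, wherever D_n ≠ 0, δ²(log|D_n|) = D_{n+1}D_{n−1}/D_n². -/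
/-- The differential operator `δφ(t) = t(t−1)φ′(t)`. -/
noncomputable def deltaOp (φ : ℝ → ℝ) : ℝ → ℝ := fun t => t * (t - 1) * deriv φ t

/-- `Dₙ(t) = det(δ^{i+j}u(t))_{0 ≤ i,j ≤ n−1}`, the `n×n` Hankel determinant of the
iterated `δ`-derivatives of `u` (with `D₀ = 1`). -/
noncomputable def Dn (u : ℝ → ℝ) (n : ℕ) : ℝ → ℝ := fun t =>
  Matrix.det (Matrix.of fun i j : Fin n => (deltaOp^[(i : ℕ) + (j : ℕ)] u) t)

namespace DarbouxAux

open Matrix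

variable {ι : Type*} [Fintype ι] [DecidableEq ι]

/-- The map `ι ⊕ Fin 1 → ι ⊕ Fin 2` keeping `ι` and sending the extra point to `k`. -/
def emb (k : Fin 2) : ι ⊕ Fin 1 → ι ⊕ Fin 2 := Sum.map id fun _ => k

theorem mapdet {R S : Type*} [CommRing R] [CommRing S] (g : R →+* S) {α : Type*}
    [Fintype α] [DecidableEq α] (M : Matrix α α R) : (M.map g).det = g M.det :=
  (g.map_det M).symm

/-- Desnanot–Jacobi identity, over a field, assuming the complementary minor is invertible. -/
theorem dj_isUnit {K : Type*} [Field K] (A : Matrix (ι ⊕ Fin 2) (ι ⊕ Fin 2) K)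
    (h : IsUnit (A.submatrix Sum.inl Sum.inl).det) :
    A.det * (A.submatrix Sum.inl Sum.inl).det
      = (A.submatrix (emb 0) (emb 0)).det * (A.submatrix (emb 1) (emb 1)).det
        - (A.submatrix (emb 0) (emb 1)).det * (A.submatrix (emb 1) (emb 0)).det := by
  have hP : A.submatrix Sum.inl Sum.inl = A.toBlocks₁₁ := rfl
  haveI : Invertible A.toBlocks₁₁ := Matrix.invertibleOfIsUnitDet _ (by rwa [← hP])
  have hA : A.det = A.toBlocks₁₁.det
      * (A.toBlocks₂₂ - A.toBlocks₂₁ * ⅟A.toBlocks₁₁ * A.toBlocks₁₂).det := by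
    conv_lhs => rw [← fromBlocks_toBlocks A]
    exact det_fromBlocks₁₁ _ _ _ _
  have hminor : ∀ k l : Fin 2, (A.submatrix (emb k) (emb l)).det
      = A.toBlocks₁₁.det
        * (A.toBlocks₂₂ - A.toBlocks₂₁ * ⅟A.toBlocks₁₁ * A.toBlocks₁₂) k l := by
    intro k l
    have h1 : A.submatrix (emb k) (emb l)
        = fromBlocks A.toBlocks₁₁ (Matrix.of fun i (_ : Fin 1) => A.toBlocks₁₂ i l)
            (Matrix.of fun (_ : Fin 1) j => A.toBlocks₂₁ k j)
            (Matrix.of fun (_ : Fin 1) (_ : Fin 1) => A.toBlocks₂₂ k l) := by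
      ext x y
      cases x <;> cases y <;> rfl
    rw [h1, det_fromBlocks₁₁]
    congr 1
    rw [Matrix.det_fin_one]
    simp [Matrix.sub_apply, Matrix.mul_apply]
  rw [hA, hminor, hminor, hminor, hminor, hP,
    det_fin_two (A.toBlocks₂₂ - A.toBlocks₂₁ * ⅟A.toBlocks₁₁ * A.toBlocks₁₂)]
  ring

/-- Desnanot–Jacobi identity over an arbitrary commutative ring. -/
theorem dj {R : Type*} [CommRing R] (A : Matrix (ι ⊕ Fin 2) (ι ⊕ Fin 2) R) :
    A.det * (A.submatrix Sum.inl Sum.inl).det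
      = (A.submatrix (emb 0) (emb 0)).det * (A.submatrix (emb 1) (emb 1)).det
        - (A.submatrix (emb 0) (emb 1)).det * (A.submatrix (emb 1) (emb 0)).det := by
  classical
  set σT := (ι ⊕ Fin 2) × (ι ⊕ Fin 2) with hσT
  let R₀ := MvPolynomial σT ℤ
  let K := FractionRing R₀
  set X : Matrix (ι ⊕ Fin 2) (ι ⊕ Fin 2) R₀ := Matrix.of fun i j => MvPolynomial.X (i, j)
    with hX
  let f : R₀ →+* K := algebraMap R₀ K
  have hinj : Function.Injective f := IsFractionRing.injective R₀ K
  -- the generic complementary minor is nonzero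
  have hP0 : (X.submatrix Sum.inl Sum.inl).det ≠ 0 := by
    intro hc
    have h1 := congrArg (MvPolynomial.eval fun p : σT => if p.1 = p.2 then (1 : ℤ) else 0) hc
    rw [map_zero, ← mapdet] at h1
    have h2 : ((X.submatrix Sum.inl Sum.inl).map
        (MvPolynomial.eval fun p : σT => if p.1 = p.2 then (1 : ℤ) else 0))
        = (1 : Matrix ι ι ℤ) := by
      ext i j
      by_cases hij : i = j <;>
        simp [hX, Matrix.one_apply, hij, Matrix.map_apply, Matrix.submatrix_apply]
    rw [h2, det_one] at h1
    norm_num at h1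
  have hU : IsUnit ((X.map f).submatrix Sum.inl Sum.inl).det := by
    have heq : ((X.map f).submatrix Sum.inl Sum.inl).det
        = f (X.submatrix Sum.inl Sum.inl).det := by
      rw [Matrix.submatrix_map, mapdet]
    rw [heq]
    have hne : f (X.submatrix Sum.inl Sum.inl).det ≠ (0 : FractionRing R₀) :=
      fun hc => hP0 (hinj (by rw [hc, map_zero]))
    exact hne.isUnit
  have key := dj_isUnit (X.map f) hU
  have keyR : X.det * (X.submatrix Sum.inl Sum.inl).det
      = (X.submatrix (emb 0) (emb 0)).det * (X.submatrix (emb 1) (emb 1)).det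
        - (X.submatrix (emb 0) (emb 1)).det * (X.submatrix (emb 1) (emb 0)).det := by
    apply hinj
    simp only [_root_.map_mul, _root_.map_sub, ← mapdet, ← Matrix.submatrix_map]
    exact key
  let φ : R₀ →+* R := MvPolynomial.eval₂Hom (Int.castRingHom R) fun p : σT => A p.1 p.2
  have hXA : X.map φ = A := by
    ext i j
    exact MvPolynomial.eval₂Hom_X' _ _ _
  have final := congrArg φ keyR
  simp only [_root_.map_mul, _root_.map_sub, ← mapdet, ← Matrix.submatrix_map, hXA] at final
  exact final

/-- Derivative of a determinant of a matrix of functions, as a sum over columns. -/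
theorem hasDerivAt_det {N : ℕ} {t : ℝ} (A : ℝ → Matrix (Fin N) (Fin N) ℝ)
    (A' : Matrix (Fin N) (Fin N) ℝ) (h : ∀ i j, HasDerivAt (fun s => A s i j) (A' i j) t) :
    HasDerivAt (fun s => (A s).det)
      (∑ j, ((A t).updateCol j fun i => A' i j).det) t := by
  have hd : HasDerivAt (fun s => ∑ σ : Equiv.Perm (Fin N),
        ((Equiv.Perm.sign σ : ℤ) : ℝ) * ∏ i, A s (σ i) i)
      (∑ σ : Equiv.Perm (Fin N), ((Equiv.Perm.sign σ : ℤ) : ℝ) *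
        ∑ i, (∏ k ∈ Finset.univ.erase i, A t (σ k) k) * A' (σ i) i) t := by
    apply HasDerivAt.fun_sum
    intro σ _
    have hp := HasDerivAt.fun_finsetProd (u := (Finset.univ : Finset (Fin N)))
      (f := fun i s => A s (σ i) i) (f' := fun i => A' (σ i) i) (x := t)
      (fun i _ => h (σ i) i)
    have := hp.const_mul ((Equiv.Perm.sign σ : ℤ) : ℝ)
    simpa [smul_eq_mul, Finset.mul_sum] using this
  have he : (fun s => (A s).det) = fun s => ∑ σ : Equiv.Perm (Fin N),
      ((Equiv.Perm.sign σ : ℤ) : ℝ) * ∏ i, A s (σ i) i := by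
    funext s
    exact Matrix.det_apply' _
  rw [he]
  convert hd using 1
  calc ∑ j, ((A t).updateCol j fun i => A' i j).det
      = ∑ j, ∑ σ : Equiv.Perm (Fin N), ((Equiv.Perm.sign σ : ℤ) : ℝ) *
          ∏ i, ((A t).updateCol j fun i' => A' i' j) (σ i) i := by
        simp only [Matrix.det_apply']
    _ = ∑ j, ∑ σ : Equiv.Perm (Fin N), ((Equiv.Perm.sign σ : ℤ) : ℝ) *
          ((∏ k ∈ Finset.univ.erase j, A t (σ k) k) * A' (σ j) j) := by
        refine Finset.sum_congr rfl fun j _ => Finset.sum_congr rfl fun σ _ => ?_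
        congr 1
        rw [← Finset.mul_prod_erase Finset.univ _ (Finset.mem_univ j), mul_comm]
        congr 1
        · refine Finset.prod_congr rfl fun k hk => ?_
          rw [Matrix.updateCol_apply, if_neg (Finset.ne_of_mem_erase hk)]
        · exact Matrix.updateCol_self
    _ = ∑ σ : Equiv.Perm (Fin N), ((Equiv.Perm.sign σ : ℤ) : ℝ) *
          ∑ i, (∏ k ∈ Finset.univ.erase i, A t (σ k) k) * A' (σ i) i := by
        rw [Finset.sum_comm]
        exact Finset.sum_congr rfl fun σ _ => (Finset.mul_sum _ _ _).symm

variable {u : ℝ → ℝ} {a b : ℝ}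

theorem smooth_iter (hu : ContDiffOn ℝ (⊤ : ℕ∞) u (Set.Ioo a b)) (k : ℕ) :
    ContDiffOn ℝ (⊤ : ℕ∞) (deltaOp^[k] u) (Set.Ioo a b) := by
  induction k with
  | zero => exact hu
  | succ k ih =>
    rw [Function.iterate_succ_apply']
    show ContDiffOn ℝ (⊤ : ℕ∞) (fun t => t * (t - 1) * deriv (deltaOp^[k] u) t) (Set.Ioo a b)
    exact ContDiffOn.mul
      ((contDiff_id.mul (contDiff_id.sub contDiff_const)).contDiffOn)
      (ih.deriv_of_isOpen isOpen_Ioo (by simp))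

theorem hasDeriv_iter (hu : ContDiffOn ℝ (⊤ : ℕ∞) u (Set.Ioo a b)) (k : ℕ) {t : ℝ}
    (ht : t ∈ Set.Ioo a b) :
    HasDerivAt (deltaOp^[k] u) (deriv (deltaOp^[k] u) t) t :=
  (((smooth_iter hu k).differentiableOn (by simp)).differentiableAt
    (isOpen_Ioo.mem_nhds ht)).hasDerivAt

theorem iterate_succ_eq (k : ℕ) (t : ℝ) :
    (deltaOp^[k + 1] u) t = t * (t - 1) * deriv (deltaOp^[k] u) t := by
  rw [Function.iterate_succ_apply']
  rfl

/-- The key differentiation step: applying `δ` to a Hankel-type determinant shifts the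
last column. -/
theorem delta_det (hu : ContDiffOn ℝ (⊤ : ℕ∞) u (Set.Ioo a b)) {N : ℕ} (r : Fin (N + 1) → ℕ)
    {t : ℝ} (ht : t ∈ Set.Ioo a b) :
    deltaOp (fun s => (Matrix.of fun p q : Fin (N + 1) => (deltaOp^[r p + (q : ℕ)] u) s).det) t
      = (Matrix.of fun p q : Fin (N + 1) =>
          (deltaOp^[r p + (if (q : ℕ) = N then N + 1 else (q : ℕ))] u) t).det := by
  have hder := hasDerivAt_det
    (fun s => Matrix.of fun p q : Fin (N + 1) => (deltaOp^[r p + (q : ℕ)] u) s)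
    (Matrix.of fun p q : Fin (N + 1) => deriv (deltaOp^[r p + (q : ℕ)] u) t)
    (fun i j => hasDeriv_iter hu _ ht)
  show t * (t - 1) * deriv _ t = _
  rw [hder.deriv, Finset.mul_sum]
  have hterm : ∀ j : Fin (N + 1),
      t * (t - 1) * ((Matrix.of fun p q : Fin (N + 1) => (deltaOp^[r p + (q : ℕ)] u) t).updateCol
          j fun i => (Matrix.of fun p q : Fin (N + 1) => deriv (deltaOp^[r p + (q : ℕ)] u) t) i j).det
      = ((Matrix.of fun p q : Fin (N + 1) => (deltaOp^[r p + (q : ℕ)] u) t).updateCol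
          j fun i => (deltaOp^[r i + (j : ℕ) + 1] u) t).det := by
    intro j
    have hcol : ((t * (t - 1)) • fun i =>
          Matrix.of (fun p q : Fin (N + 1) => deriv (deltaOp^[r p + (q : ℕ)] u) t) i j)
        = fun i : Fin (N + 1) => (deltaOp^[r i + (j : ℕ) + 1] u) t := by
      funext i
      exact (iterate_succ_eq (r i + (j : ℕ)) t).symm
    rw [← Matrix.det_updateCol_smul, hcol]
  simp only [hterm]
  rw [Finset.sum_eq_single (Fin.last N)]
  · congr 1
    ext i q
    rw [Matrix.updateCol_apply]
    by_cases hq : q = Fin.last N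
    · subst hq
      simp [Nat.add_assoc]
    · have hqv : (q : ℕ) ≠ N := fun hh => hq (Fin.ext (by simpa using hh))
      simp only [if_neg hq, if_neg hqv, Matrix.of_apply]
  · intro j _ hj
    have hjv : (j : ℕ) < N := by
      rcases lt_or_eq_of_le (Nat.lt_succ_iff.mp j.isLt) with h' | h'
      · exact h'
      · exact absurd (Fin.ext (by simpa using h')) hj
    set j' : Fin (N + 1) := ⟨(j : ℕ) + 1, by omega⟩ with hj'
    apply Matrix.det_zero_of_column_eq (show j ≠ j' by
      intro hh
      have := congrArg Fin.val hh
      simp [hj'] at this)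
    intro k
    rw [Matrix.updateCol_apply, Matrix.updateCol_apply, if_pos rfl,
      if_neg (show j' ≠ j by
        intro hh
        have := congrArg Fin.val hh
        simp [hj'] at this)]
    show (deltaOp^[r k + (j : ℕ) + 1] u) t = (deltaOp^[r k + (j' : ℕ)] u) t
    simp [hj', Nat.add_assoc]
  · intro hl
    exact absurd (Finset.mem_univ _) hl

end DarbouxAux

/-- Darboux's formula: the Hankel determinants `Dₙ` of the iterated `δ`-derivatives of a
smooth function `u` satisfy `Dₙ·δ²Dₙ − (δDₙ)² = D_{n+1}·D_{n−1}`. -/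
theorem statement15 (u : ℝ → ℝ) (a b : ℝ) (hu : ContDiffOn ℝ (⊤ : ℕ∞) u (Set.Ioo a b))
    (n : ℕ) (hn : 1 ≤ n) :
    ∀ t ∈ Set.Ioo a b,
      Dn u n t * deltaOp (deltaOp (Dn u n)) t - (deltaOp (Dn u n) t) ^ 2
        = Dn u (n + 1) t * Dn u (n - 1) t := by
  classical
  open Matrix DarbouxAux in
  obtain ⟨m, rfl⟩ : ∃ m, n = m + 1 := ⟨n - 1, (Nat.succ_pred_eq_of_pos hn).symm⟩
  intro t ht
  -- the shifted column index
  set c : Fin (m + 1) → ℕ := fun q => if (q : ℕ) = m then m + 1 else (q : ℕ) with hc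
  -- G = δ Dₙ pointwise on the interval
  have hG : ∀ t' ∈ Set.Ioo a b, deltaOp (Dn u (m + 1)) t'
      = (Matrix.of fun p q : Fin (m + 1) => (deltaOp^[(p : ℕ) + c q] u) t').det := by
    intro t' ht'
    exact delta_det hu (fun p => (p : ℕ)) ht'
  -- transposed form of G
  have hGT : ∀ t' : ℝ, (Matrix.of fun p q : Fin (m + 1) => (deltaOp^[(p : ℕ) + c q] u) t').det
      = (Matrix.of fun p q : Fin (m + 1) => (deltaOp^[c p + (q : ℕ)] u) t').det := by
    intro t'
    rw [← Matrix.det_transpose (Matrix.of fun p q : Fin (m + 1) => (deltaOp^[(p : ℕ) + c q] u) t')]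
    congr 1
    ext p q
    simp [Matrix.transpose_apply, Nat.add_comm]
  -- second derivative
  have hδ2 : deltaOp (deltaOp (Dn u (m + 1))) t
      = (Matrix.of fun p q : Fin (m + 1) => (deltaOp^[c p + c q] u) t).det := by
    have hev : deltaOp (Dn u (m + 1)) =ᶠ[nhds t]
        fun s => (Matrix.of fun p q : Fin (m + 1) => (deltaOp^[c p + (q : ℕ)] u) s).det := by
      filter_upwards [isOpen_Ioo.mem_nhds ht] with s hs
      rw [hG s hs, hGT]
    show t * (t - 1) * deriv (deltaOp (Dn u (m + 1))) t = _
    rw [hev.deriv_eq]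
    exact delta_det hu c ht
  -- the Desnanot–Jacobi identity for the big Hankel matrix
  set ρ : Fin m ⊕ Fin 2 → ℕ := Sum.elim Fin.val (fun k : Fin 2 => m + (k : ℕ)) with hρ
  set A : Matrix (Fin m ⊕ Fin 2) (Fin m ⊕ Fin 2) ℝ :=
    Matrix.of fun x y => (deltaOp^[ρ x + ρ y] u) t with hA
  have key := dj (ι := Fin m) A
  -- identify the six determinants
  have hbig : A.det = Dn u (m + 1 + 1) t := by
    have : A = (Matrix.of fun i j : Fin (m + 2) =>
        (deltaOp^[(i : ℕ) + (j : ℕ)] u) t).submatrix finSumFinEquiv finSumFinEquiv := by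
      ext x y
      have hx : ∀ z : Fin m ⊕ Fin 2, ((finSumFinEquiv z : Fin (m + 2)) : ℕ) = ρ z := by
        rintro (i | k) <;> simp [hρ]
      simp [hA, Matrix.submatrix_apply, hx]
    rw [this, Matrix.det_submatrix_equiv_self]
    rfl
  have hcompl : (A.submatrix Sum.inl Sum.inl).det = Dn u m t := rfl
  have hρ0 : ∀ z : Fin m ⊕ Fin 1, ρ (emb 0 z) = ((finSumFinEquiv z : Fin (m + 1)) : ℕ) := by
    rintro (i | k) <;> simp [hρ, emb, Fin.val_eq_zero]
  have hρ1 : ∀ z : Fin m ⊕ Fin 1, ρ (emb 1 z) = c (finSumFinEquiv z) := by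
    rintro (i | k)
    · have : (i : ℕ) < m := i.isLt
      simp only [hρ, emb, hc]
      simp [Fin.val_eq_zero, Nat.ne_of_lt this]
    · simp only [hρ, emb, hc]
      simp [Fin.val_eq_zero]
  have h00 : (A.submatrix (emb 0) (emb 0)).det = Dn u (m + 1) t := by
    have : A.submatrix (emb 0) (emb 0) = (Matrix.of fun i j : Fin (m + 1) =>
        (deltaOp^[(i : ℕ) + (j : ℕ)] u) t).submatrix finSumFinEquiv finSumFinEquiv := by
      ext x y
      simp [hA, Matrix.submatrix_apply, hρ0]
    rw [this, Matrix.det_submatrix_equiv_self]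
    rfl
  have h11 : (A.submatrix (emb 1) (emb 1)).det = (Matrix.of fun p q : Fin (m + 1) =>
      (deltaOp^[c p + c q] u) t).det := by
    have : A.submatrix (emb 1) (emb 1) = (Matrix.of fun p q : Fin (m + 1) =>
        (deltaOp^[c p + c q] u) t).submatrix finSumFinEquiv finSumFinEquiv := by
      ext x y
      simp [hA, Matrix.submatrix_apply, hρ1]
    rw [this, Matrix.det_submatrix_equiv_self]
  have h01 : (A.submatrix (emb 0) (emb 1)).det = (Matrix.of fun p q : Fin (m + 1) =>
      (deltaOp^[(p : ℕ) + c q] u) t).det := by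
    have : A.submatrix (emb 0) (emb 1) = (Matrix.of fun p q : Fin (m + 1) =>
        (deltaOp^[(p : ℕ) + c q] u) t).submatrix finSumFinEquiv finSumFinEquiv := by
      ext x y
      simp [hA, Matrix.submatrix_apply, hρ0, hρ1]
    rw [this, Matrix.det_submatrix_equiv_self]
  have h10 : (A.submatrix (emb 1) (emb 0)).det = (Matrix.of fun p q : Fin (m + 1) =>
      (deltaOp^[(p : ℕ) + c q] u) t).det := by
    have : A.submatrix (emb 1) (emb 0) = (Matrix.of fun p q : Fin (m + 1) =>
        (deltaOp^[c p + (q : ℕ)] u) t).submatrix finSumFinEquiv finSumFinEquiv := by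
      ext x y
      simp [hA, Matrix.submatrix_apply, hρ0, hρ1]
    rw [this, Matrix.det_submatrix_equiv_self, ← hGT]
  rw [hbig, hcompl, h00, h11, h01, h10] at key
  rw [hδ2, hG t ht, Nat.add_sub_cancel]
  have hDn : Dn u (m + 1) t = (Matrix.of fun i j : Fin (m + 1) =>
      (deltaOp^[(i : ℕ) + (j : ℕ)] u) t).det := rfl
  rw [key]
  ring
end

section
/- Let m be a positive integer and r, s integers, and set b₁ = (m+r+1)/2, b₂ = (m−r+2s−1)/2, b₃ = (r+m−1)/2, b₄ = (m−r−1)/2. Let n ≥ 2 and let T_{n−1}, T_n, T_{n+1} be smooth nonvanishing real functions on an open interval I with I ∩ {0,1} = ∅ and I ⊆ (0,∞) ∩ (1,∞) complement-free (i.e. t, t−1 of constant sign), and for k ∈ {n−1, n, n+1} set τ_k(t) = T_k(t)·|t|^{−(b₁+b₄)(b₁+b₂+k−1)}·|t−1|^{−(b₁+b₄)(b₁−b₂+k−1)}. Then the Toda equation (d/dt)(t(t−1)·(d/dt) log τ_n) + (b₁+b₃+n)(b₃+b₄+n) = τ_{n+1}τ_{n−1}/τ_n² holds on I if and only if T_{n+1}·T_{n−1}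 = (t²−t)(T_n·T_n″ − (T_n′)²) + (2t−1)·T_n·T_n′ + (n−1)(n+r)·T_n² holds on I. -/
/-- Equivalence of Okamoto's Toda equation for the tau-functions
`τ_k(t) = T_k(t)·|t|^{−(b₁+b₄)(b₁+b₂+k−1)}·|t−1|^{−(b₁+b₄)(b₁−b₂+k−1)}` with the
polynomial-type recursion
`T_{n+1}T_{n−1} = (t²−t)(T_nT_n″ − (T_n′)²) + (2t−1)T_nT_n′ + (n−1)(n+r)T_n²`
for the numerators, on an open interval avoiding `0` and `1`. -/
theorem statement16 (m : ℕ) (hm : 0 < m) (r s : ℤ) (n : ℕ) (hn : 2 ≤ n)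
    (a c : ℝ) (hI : Set.Ioo a c ∩ {0, 1} = ∅)
    (Tprev Tcur Tnext : ℝ → ℝ)
    (hTprev : ContDiffOn ℝ (⊤ : ℕ∞) Tprev (Set.Ioo a c))
    (hTcur : ContDiffOn ℝ (⊤ : ℕ∞) Tcur (Set.Ioo a c))
    (hTnext : ContDiffOn ℝ (⊤ : ℕ∞) Tnext (Set.Ioo a c))
    (hTprev0 : ∀ t ∈ Set.Ioo a c, Tprev t ≠ 0)
    (hTcur0 : ∀ t ∈ Set.Ioo a c, Tcur t ≠ 0)
    (hTnext0 : ∀ t ∈ Set.Ioo a c, Tnext t ≠ 0) :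
    let b₁ : ℝ := ((m : ℝ) + (r : ℝ) + 1) / 2
    let b₂ : ℝ := ((m : ℝ) - (r : ℝ) + 2 * (s : ℝ) - 1) / 2
    let b₃ : ℝ := ((r : ℝ) + (m : ℝ) - 1) / 2
    let b₄ : ℝ := ((m : ℝ) - (r : ℝ) - 1) / 2
    let τ : (ℝ → ℝ) → ℕ → ℝ → ℝ := fun F k t =>
      F t * |t| ^ (-((b₁ + b₄) * (b₁ + b₂ + (k : ℝ) - 1)))
        * |t - 1| ^ (-((b₁ + b₄) * (b₁ - b₂ + (k : ℝ) - 1)))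
    ((∀ t ∈ Set.Ioo a c,
        deriv (fun x => x * (x - 1) * deriv (fun y => Real.log (τ Tcur n y)) x) t
            + (b₁ + b₃ + (n : ℝ)) * (b₃ + b₄ + (n : ℝ))
          = τ Tnext (n + 1) t * τ Tprev (n - 1) t / (τ Tcur n t) ^ 2) ↔
      (∀ t ∈ Set.Ioo a c,
        Tnext t * Tprev t
          = (t ^ 2 - t) * (Tcur t * deriv (deriv Tcur) t - (deriv Tcur t) ^ 2)
            + (2 * t - 1) * (Tcur t * deriv Tcur t)
            + ((n : ℝ) - 1) * ((n : ℝ) + (r : ℝ)) * (Tcur t) ^ 2)) := by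
  intro b₁ b₂ b₃ b₄ τ
  have hb₁ : b₁ = ((m : ℝ) + (r : ℝ) + 1) / 2 := rfl
  have hb₂ : b₂ = ((m : ℝ) - (r : ℝ) + 2 * (s : ℝ) - 1) / 2 := rfl
  have hb₃ : b₃ = ((r : ℝ) + (m : ℝ) - 1) / 2 := rfl
  have hb₄ : b₄ = ((m : ℝ) - (r : ℝ) - 1) / 2 := rfl
  set S := Set.Ioo a c with hSdef
  have hS : IsOpen S := isOpen_Ioo
  -- every point of S is ≠ 0 and ≠ 1
  have hne : ∀ x ∈ S, x ≠ 0 ∧ x ≠ 1 := by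
    intro x hx
    have h0 : x ∉ ({0, 1} : Set ℝ) := by
      intro hmem
      have hmem' : x ∈ Set.Ioo a c ∩ {0, 1} := ⟨hx, hmem⟩
      rw [hI] at hmem'
      exact hmem'
    simpa [not_or] using h0
  -- first derivatives
  have hT1 : ∀ x ∈ S, HasDerivAt Tcur (deriv Tcur x) x := by
    intro x hx
    exact ((hTcur.contDiffAt (hS.mem_nhds hx)).differentiableAt (by simp)).hasDerivAt
  have hTd : ContDiffOn ℝ (⊤ : ℕ∞) (deriv Tcur) S := hTcur.deriv_of_isOpen hS (by simp)
  have hT2 : ∀ x ∈ S, HasDerivAt (deriv Tcur) (deriv (deriv Tcur) x) x := by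
    intro x hx
    exact ((hTd.contDiffAt (hS.mem_nhds hx)).differentiableAt (by simp)).hasDerivAt
  -- abbreviations for the exponents
  set p : ℝ := -((b₁ + b₄) * (b₁ + b₂ + (n : ℝ) - 1)) with hp
  set q : ℝ := -((b₁ + b₄) * (b₁ - b₂ + (n : ℝ) - 1)) with hq
  -- log of τ on S
  have hlog : ∀ x ∈ S, Real.log (τ Tcur n x)
      = Real.log (Tcur x) + p * Real.log x + q * Real.log (x - 1) := by
    intro x hx
    obtain ⟨hx0, hx1⟩ := hne x hx
    have ha0 : (0 : ℝ) < |x| := abs_pos.2 hx0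
    have ha1 : (0 : ℝ) < |x - 1| := abs_pos.2 (sub_ne_zero.2 hx1)
    show Real.log (Tcur x * |x| ^ p * |x - 1| ^ q) = _
    rw [Real.log_mul (mul_ne_zero (hTcur0 x hx) (Real.rpow_pos_of_pos ha0 p).ne')
        (Real.rpow_pos_of_pos ha1 q).ne',
      Real.log_mul (hTcur0 x hx) (Real.rpow_pos_of_pos ha0 p).ne',
      Real.log_rpow ha0, Real.log_rpow ha1, Real.log_abs, Real.log_abs,
      mul_comm p, mul_comm q]
  -- derivative of log τ on S
  have hlogd : ∀ x ∈ S, deriv (fun y => Real.log (τ Tcur n y)) x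
      = deriv Tcur x / Tcur x + p * x⁻¹ + q * (x - 1)⁻¹ := by
    intro x hx
    obtain ⟨hx0, hx1⟩ := hne x hx
    have hL : HasDerivAt (fun y => Real.log (Tcur y) + p * Real.log y + q * Real.log (y - 1))
        (deriv Tcur x / Tcur x + p * x⁻¹ + q * (x - 1)⁻¹) x := by
      have h1 := (hT1 x hx).log (hTcur0 x hx)
      have h2 := (Real.hasDerivAt_log hx0).const_mul p
      have h3 := ((((hasDerivAt_id x).sub_const 1).log (sub_ne_zero.2 hx1)).const_mul q)
      exact ((h1.add h2).add h3).congr_deriv (by simp [one_div])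
    have hEq : (fun y => Real.log (τ Tcur n y))
        =ᶠ[nhds x] fun y => Real.log (Tcur y) + p * Real.log y + q * Real.log (y - 1) := by
      filter_upwards [hS.mem_nhds hx] with y hy using hlog y hy
    rw [hEq.deriv_eq, hL.deriv]
  -- pointwise equivalence
  have key : ∀ t ∈ S,
      (deriv (fun x => x * (x - 1) * deriv (fun y => Real.log (τ Tcur n y)) x) t
            + (b₁ + b₃ + (n : ℝ)) * (b₃ + b₄ + (n : ℝ))
          = τ Tnext (n + 1) t * τ Tprev (n - 1) t / (τ Tcur n t) ^ 2) ↔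
      (Tnext t * Tprev t
          = (t ^ 2 - t) * (Tcur t * deriv (deriv Tcur) t - (deriv Tcur t) ^ 2)
            + (2 * t - 1) * (Tcur t * deriv Tcur t)
            + ((n : ℝ) - 1) * ((n : ℝ) + (r : ℝ)) * (Tcur t) ^ 2) := by
    intro t ht
    obtain ⟨ht0, ht1⟩ := hne t ht
    have ht1' : t - 1 ≠ 0 := sub_ne_zero.2 ht1
    have hT0 : Tcur t ≠ 0 := hTcur0 t ht
    -- derivative of the Toda inner function
    have hψ : HasDerivAt
        (fun x => x * (x - 1) * (deriv Tcur x / Tcur x + p * x⁻¹ + q * (x - 1)⁻¹))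
        ((1 * (t - 1) + t * 1) * (deriv Tcur t / Tcur t + p * t⁻¹ + q * (t - 1)⁻¹)
          + t * (t - 1) *
            ((deriv (deriv Tcur) t * Tcur t - deriv Tcur t * deriv Tcur t) / Tcur t ^ 2
              + p * (-(t ^ 2)⁻¹) + q * (-1 / (t - 1) ^ 2))) t := by
      have hu : HasDerivAt (fun x : ℝ => x * (x - 1)) (1 * (t - 1) + t * 1) t :=
        (hasDerivAt_id t).mul ((hasDerivAt_id t).sub_const 1)
      have hv1 : HasDerivAt (fun x => deriv Tcur x / Tcur x)
          ((deriv (deriv Tcur) t * Tcur t - deriv Tcur t * deriv Tcur t) / Tcur t ^ 2) t :=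
        (hT2 t ht).div (hT1 t ht) hT0
      have hv2 : HasDerivAt (fun x : ℝ => p * x⁻¹) (p * (-(t ^ 2)⁻¹)) t :=
        (hasDerivAt_inv ht0).const_mul p
      have hv3 : HasDerivAt (fun x : ℝ => q * (x - 1)⁻¹) (q * (-1 / (t - 1) ^ 2)) t :=
        (((hasDerivAt_id t).sub_const 1).inv ht1').const_mul q
      exact hu.mul ((hv1.add hv2).add hv3)
    have hderiv : deriv (fun x => x * (x - 1) * deriv (fun y => Real.log (τ Tcur n y)) x) t
        = (1 * (t - 1) + t * 1) * (deriv Tcur t / Tcur t + p * t⁻¹ + q * (t - 1)⁻¹)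
          + t * (t - 1) *
            ((deriv (deriv Tcur) t * Tcur t - deriv Tcur t * deriv Tcur t) / Tcur t ^ 2
              + p * (-(t ^ 2)⁻¹) + q * (-1 / (t - 1) ^ 2)) := by
      have hEq : (fun x => x * (x - 1) * deriv (fun y => Real.log (τ Tcur n y)) x)
          =ᶠ[nhds t] fun x => x * (x - 1) *
            (deriv Tcur x / Tcur x + p * x⁻¹ + q * (x - 1)⁻¹) := by
        filter_upwards [hS.mem_nhds ht] with x hx
        rw [hlogd x hx]
      rw [hEq.deriv_eq, hψ.deriv]
    -- the right-hand side simplifies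
    have hcast : ((n - 1 : ℕ) : ℝ) = (n : ℝ) - 1 := by
      have : 1 ≤ n := by omega
      push_cast [this]; ring
    have hRHS : τ Tnext (n + 1) t * τ Tprev (n - 1) t / (τ Tcur n t) ^ 2
        = Tnext t * Tprev t / Tcur t ^ 2 := by
      have ha0 : (0 : ℝ) < |t| := abs_pos.2 ht0
      have ha1 : (0 : ℝ) < |t - 1| := abs_pos.2 ht1'
      show Tnext t * |t| ^ (-((b₁ + b₄) * (b₁ + b₂ + ((n + 1 : ℕ) : ℝ) - 1)))
            * |t - 1| ^ (-((b₁ + b₄) * (b₁ - b₂ + ((n + 1 : ℕ) : ℝ) - 1)))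
          * (Tprev t * |t| ^ (-((b₁ + b₄) * (b₁ + b₂ + ((n - 1 : ℕ) : ℝ) - 1)))
            * |t - 1| ^ (-((b₁ + b₄) * (b₁ - b₂ + ((n - 1 : ℕ) : ℝ) - 1))))
          / (Tcur t * |t| ^ p * |t - 1| ^ q) ^ 2 = _
      rw [hcast]
      push_cast
      have hX : |t| ^ (-((b₁ + b₄) * (b₁ + b₂ + ((n : ℝ) + 1) - 1)))
          * |t| ^ (-((b₁ + b₄) * (b₁ + b₂ + ((n : ℝ) - 1) - 1))) = (|t| ^ p) ^ 2 := by
        rw [sq, ← Real.rpow_add ha0, ← Real.rpow_add ha0, hp]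
        ring_nf
      have hY : |t - 1| ^ (-((b₁ + b₄) * (b₁ - b₂ + ((n : ℝ) + 1) - 1)))
          * |t - 1| ^ (-((b₁ + b₄) * (b₁ - b₂ + ((n : ℝ) - 1) - 1))) = (|t - 1| ^ q) ^ 2 := by
        rw [sq, ← Real.rpow_add ha1, ← Real.rpow_add ha1, hq]
        ring_nf
      have hXne : (|t| ^ p) ≠ 0 := (Real.rpow_pos_of_pos ha0 p).ne'
      have hYne : (|t - 1| ^ q) ≠ 0 := (Real.rpow_pos_of_pos ha1 q).ne'
      rw [div_eq_div_iff (by positivity) (pow_ne_zero 2 hT0)]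
      linear_combination (Tnext t * Tprev t * Tcur t ^ 2
          * |t - 1| ^ (-((b₁ + b₄) * (b₁ - b₂ + ((n : ℝ) + 1) - 1)))
          * |t - 1| ^ (-((b₁ + b₄) * (b₁ - b₂ + ((n : ℝ) - 1) - 1)))) * hX
        + (Tnext t * Tprev t * Tcur t ^ 2 * (|t| ^ p) ^ 2) * hY
    rw [hderiv, hRHS, eq_div_iff (pow_ne_zero 2 hT0)]
    have hid : ((1 * (t - 1) + t * 1) * (deriv Tcur t / Tcur t + p * t⁻¹ + q * (t - 1)⁻¹)
          + t * (t - 1) *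
            ((deriv (deriv Tcur) t * Tcur t - deriv Tcur t * deriv Tcur t) / Tcur t ^ 2
              + p * (-(t ^ 2)⁻¹) + q * (-1 / (t - 1) ^ 2))
          + (b₁ + b₃ + (n : ℝ)) * (b₃ + b₄ + (n : ℝ))) * Tcur t ^ 2
        = (t ^ 2 - t) * (Tcur t * deriv (deriv Tcur) t - (deriv Tcur t) ^ 2)
            + (2 * t - 1) * (Tcur t * deriv Tcur t)
            + ((n : ℝ) - 1) * ((n : ℝ) + (r : ℝ)) * (Tcur t) ^ 2 := by
      rw [hp, hq, hb₁, hb₂, hb₃, hb₄]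
      field_simp
      ring
    rw [hid]
    exact eq_comm
  constructor
  · intro h t ht
    exact (key t ht).1 (h t ht)
  · intro h t ht
    exact (key t ht).2 (h t ht)
end
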